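/- Let φ, θ, z be real numbers and let q be the quaternion q = cos(φ/2)cos(z/2) + sin(φ/2)cos(θ − z/2)·i + sin(φ/2)sin(θ − z/2)·j + cos(φ/2)sin(z/2)·k. Then q · k · (conj q) = sin φ · sin θ · i − sin φ · cos θ · j + cos φ · k. (This computes the Hopf-fibration projection of the element of SU(2) with cylindrical coordinates (φ, θ, z): it lands on the point of S² with spherical coordinates (φ, θ).) -/

import Mathlib

open scoped Quaternion
open Quaternion Real

/-!
Write `q = u * r` with `u = cos(φ/2) + sin(φ/2)(cos θ · i + sin θ · j)` and
`r = cos(z/2) + sin(z/2) · k`. The unit quaternion `r` commutes with `k`, so conjugation by `r`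
fixes `k` and `q k q* = u k u*`. Conjugation by `u` rotates by `φ` about the horizontal axis
`cos θ · i + sin θ · j`, which the double-angle formulas make explicit.
-/

theorem Quaternion.mul_mul_mul_star_mul_of_commute {R : Type*} [CommRing R] {u r x : ℍ[R]}
    (h : Commute r x) (hr : normSq r = 1) : u * r * x * star (u * r) = u * x * star u := by
  calc u * r * x * star (u * r) = u * (x * (r * star r)) * star u := by
        simp only [star_mul, mul_assoc, h.eq]
    _ = u * x * star u := by rw [self_mul_star, hr, coe_one, mul_one]

theorem commute_rotor_k (t : ℝ) : Commute (⟨cos t, 0, 0, sin t⟩ : ℍ[ℝ]) ⟨0, 0, 0, 1⟩ := by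
  ext <;> simp

theorem normSq_rotor_k (t : ℝ) : normSq (⟨cos t, 0, 0, sin t⟩ : ℍ[ℝ]) = 1 :=
  (normSq_def' _).trans (by simp [cos_sq_add_sin_sq])

theorem hopf_cylindrical_eq_mul (φ θ z : ℝ) :
    (⟨cos (φ / 2) * cos (z / 2), sin (φ / 2) * cos (θ - z / 2),
        sin (φ / 2) * sin (θ - z / 2), cos (φ / 2) * sin (z / 2)⟩ : ℍ[ℝ]) =
      ⟨cos (φ / 2), sin (φ / 2) * cos θ, sin (φ / 2) * sin θ, 0⟩ *
        ⟨cos (z / 2), 0, 0, sin (z / 2)⟩ := by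
  ext <;> simp only [QuaternionAlgebra.mk_mul_mk, cos_sub, sin_sub] <;> ring

theorem horizontal_rotor_mul_k_mul_star (a θ : ℝ) :
    (⟨cos a, sin a * cos θ, sin a * sin θ, 0⟩ : ℍ[ℝ]) * ⟨0, 0, 0, 1⟩ *
        star (⟨cos a, sin a * cos θ, sin a * sin θ, 0⟩ : ℍ[ℝ]) =
      ⟨0, sin (2 * a) * sin θ, -(sin (2 * a) * cos θ), cos (2 * a)⟩ := by
  have hθ := sin_sq_add_cos_sq θ
  ext <;>
    simp only [QuaternionAlgebra.star_mk, QuaternionAlgebra.mk_mul_mk, sin_two_mul, cos_two_mul']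
  case imK => linear_combination -sin a ^ 2 * hθ
  all_goals ring

theorem hopf_projection_cylindrical (φ θ z : ℝ) :
    (⟨Real.cos (φ / 2) * Real.cos (z / 2), Real.sin (φ / 2) * Real.cos (θ - z / 2),
        Real.sin (φ / 2) * Real.sin (θ - z / 2), Real.cos (φ / 2) * Real.sin (z / 2)⟩ : ℍ[ℝ]) *
        (⟨0, 0, 0, 1⟩ : ℍ[ℝ]) *
        star (⟨Real.cos (φ / 2) * Real.cos (z / 2), Real.sin (φ / 2) * Real.cos (θ - z / 2),
          Real.sin (φ / 2) * Real.sin (θ - z / 2), Real.cos (φ / 2) * Real.sin (z / 2)⟩ : ℍ[ℝ]) =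
      (⟨0, Real.sin φ * Real.sin θ, -(Real.sin φ * Real.cos θ), Real.cos φ⟩ : ℍ[ℝ]) := by
  have hu := horizontal_rotor_mul_k_mul_star (φ / 2) θ
  rw [mul_div_cancel₀ φ two_ne_zero] at hu
  rw [hopf_cylindrical_eq_mul]
  exact (mul_mul_mul_star_mul_of_commute (commute_rotor_k _) (normSq_rotor_k _)).trans hu
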